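/- Let 0 < δ < λ < 1 and let k ≥ 1 be an integer. Let B₁ := diag(λ, δ) and let B₂ := λ·R_{π/(2k)}, where R_θ denotes the 2×2 rotation matrix through angle θ. Then B₁ⁿ B₂ᵏ B₁ⁿ = λ^{n+k} δⁿ · R_{π/2} for every n ≥ 1, and consequently the lower spectral radius satisfies ϱ̲(B₁, B₂) ≤ √(λδ). -/

import Mathlib

open MeasureTheory Filter Topology

noncomputable section

/-- The operator norm of a `d × d` real matrix induced by the Euclidean norm on `ℝ^d`. -/
noncomputable def opNorm {d : ℕ} (A : Matrix (Fin d) (Fin d) ℝ) : ℝ :=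
  ‖Matrix.toEuclideanCLM (𝕜 := ℝ) (n := Fin d) A‖

/-- The singular values of a `d × d` real matrix, in decreasing order:
`singularValues A j` is `σ_{j+1}(A)`, the `(j+1)`-st largest singular value. -/
noncomputable def singularValues {d : ℕ} (A : Matrix (Fin d) (Fin d) ℝ) : Fin d → ℝ :=
  fun j =>
    (fun i => Real.sqrt ((Matrix.isHermitian_conjTranspose_mul_self A).eigenvalues i))
      (Tuple.sort (fun i => Real.sqrt ((Matrix.isHermitian_conjTranspose_mul_self A).eigenvalues i))
        (Fin.rev j))

/-- The singular value function `φ^s(A)`. -/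
noncomputable def svf {d : ℕ} (s : ℝ) (A : Matrix (Fin d) (Fin d) ℝ) : ℝ :=
  if (d : ℝ) ≤ s then |A.det| ^ (s / d)
  else ∏ i : Fin d,
    if (i : ℕ) < ⌊s⌋₊ then singularValues A i
    else if (i : ℕ) = ⌊s⌋₊ then singularValues A i ^ (s - (⌊s⌋₊ : ℝ))
    else 1

/-- The product `A_{w 0} ⋯ A_{w (n-1)}` of matrices along the word `w`. -/
noncomputable def wordProd {d n : ℕ} (A : Fin 2 → Matrix (Fin d) (Fin d) ℝ)
    (w : Fin n → Fin 2) : Matrix (Fin d) (Fin d) ℝ :=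
  (List.ofFn fun j => A (w j)).prod

/-- The probability vector `(p, 1-p)`. -/
noncomputable def pvec (p : ℝ) : Fin 2 → ℝ := ![p, 1 - p]

/-- `Σ_{i₁,…,i_n ∈ {1,2}} φ^s(A_{i₁}⋯A_{i_n})^{1−q} p_{i₁}^q ⋯ p_{i_n}^q`. -/
noncomputable def Zsum (A : Fin 2 → Matrix (Fin 2) (Fin 2) ℝ) (p q s : ℝ) (n : ℕ) : ℝ :=
  ∑ w : Fin n → Fin 2,
    svf s (wordProd A w) ^ (1 - q) * ∏ j : Fin n, pvec p (w j) ^ q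

/-- `𝔯_q(A₁, A₂, p)`. -/
noncomputable def rqDim (A : Fin 2 → Matrix (Fin 2) (Fin 2) ℝ) (p q : ℝ) : ℝ :=
  sSup {s : ℝ | 0 < s ∧ Summable (fun n : ℕ => Zsum A p q s (n + 1))}

/-- `R_q(A₁, A₂, p, s)`. -/
noncomputable def Rq (A : Fin 2 → Matrix (Fin 2) (Fin 2) ℝ) (p q s : ℝ) : ℝ :=
  limUnder atTop (fun n : ℕ => (1 / (n : ℝ)) * Real.log (Zsum A p q s n))

/-- The minimum over all words of length `n` of the norm of the corresponding product. -/
noncomputable def minNormProd (A : Fin 2 → Matrix (Fin 2) (Fin 2) ℝ) (n : ℕ) : ℝ :=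
  ⨅ w : Fin n → Fin 2, opNorm (wordProd A w)

/-- The lower spectral radius `ϱ̲(A₁, A₂)`. -/
noncomputable def lsr (A : Fin 2 → Matrix (Fin 2) (Fin 2) ℝ) : ℝ :=
  limUnder atTop (fun n : ℕ => minNormProd A n ^ (1 / (n : ℝ)))

/-- Pairs of invertible `2 × 2` matrices of operator norm less than one. -/
def validPair : Set (Matrix (Fin 2) (Fin 2) ℝ × Matrix (Fin 2) (Fin 2) ℝ) :=
  {B | IsUnit B.1 ∧ IsUnit B.2 ∧ opNorm B.1 < 1 ∧ opNorm B.2 < 1}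

/-- Rotation of `ℝ²` about the origin through angle `θ`. -/
noncomputable def rot (θ : ℝ) : Matrix (Fin 2) (Fin 2) ℝ :=
  !![Real.cos θ, -Real.sin θ; Real.sin θ, Real.cos θ]

/-- `(A₁, A₂)` is `(c, ε, λ)`-resistant. -/
def ResistantWith (c ε lam : ℝ) (A : Fin 2 → Matrix (Fin 2) (Fin 2) ℝ) : Prop :=
  ∀ n : ℕ, 1 ≤ n → ∀ w : Fin n → Fin 2,
    ((Finset.univ.filter fun j => w j = 1).card : ℝ) ≤ ε * n →
    c * lam ^ n ≤ opNorm (wordProd A w)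

/-- `(A₁, A₂)` is resistant. -/
def Resistant (A : Fin 2 → Matrix (Fin 2) (Fin 2) ℝ) : Prop :=
  ∃ c > (0:ℝ), ∃ ε > (0:ℝ), ∃ lam > (1:ℝ), ResistantWith c ε lam A

/-- `ℋ`: `2 × 2` real matrices of determinant one with two unequal real eigenvalues. -/
def Hset : Set (Matrix (Fin 2) (Fin 2) ℝ) :=
  {H | H.det = 1 ∧ ∃ a b : ℝ, a ≠ b ∧ H.charpoly.IsRoot a ∧ H.charpoly.IsRoot b}

/-- `ℰ`: `2 × 2` real matrices of determinant one with non-real eigenvalues. -/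
def Eset : Set (Matrix (Fin 2) (Fin 2) ℝ) :=
  {R | R.det = 1 ∧ ∀ x : ℝ, ¬ R.charpoly.IsRoot x}


/-- Abbreviation for the space of `2 × 2` real matrices. -/
abbrev Mat2 := Matrix (Fin 2) (Fin 2) ℝ

/-!
`B₂ᵏ = λᵏ R_{π/2}`, and a quarter turn conjugated by a diagonal matrix `D` satisfies
`D R_{π/2} D = det D • R_{π/2}`; hence the word `B₁ⁿB₂ᵏB₁ⁿ` of length `2n + k` has norm
`λ^{n+k}δⁿ`, whose `(2n + k)`-th root tends to `√(λδ)`. For an invertible pair the norm of a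
product of length `n` is at least `√(min |det Aᵢ|)ⁿ`, so `log (min ‖A_{i₁}⋯A_{i_n}‖)` is a
subadditive sequence bounded below by a multiple of `n`; by Fekete's lemma `ϱ̲` exists and is
bounded by every term `min ‖A_{i₁}⋯A_{i_n}‖^{1/n}`, in particular along the lengths `2n + k`.
-/

open scoped Matrix.Norms.L2Operator

lemma opNorm_eq_norm {d : ℕ} (A : Matrix (Fin d) (Fin d) ℝ) : opNorm A = ‖A‖ := rfl

lemma opNorm_nonneg {d : ℕ} (A : Matrix (Fin d) (Fin d) ℝ) : 0 ≤ opNorm A := norm_nonneg _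

lemma sum_sq_apply_le_opNorm_sq {d : ℕ} (A : Matrix (Fin d) (Fin d) ℝ) (i : Fin d) :
    ∑ j, A j i ^ 2 ≤ opNorm A ^ 2 := by
  have h := A.l2_opNorm_mulVec (EuclideanSpace.single i 1)
  rw [PiLp.norm_single, norm_one, mul_one, EuclideanSpace.norm_eq, Real.sqrt_le_iff] at h
  rw [opNorm_eq_norm]
  simpa [Matrix.mulVec_single] using h.2

lemma abs_det_le_opNorm_sq (A : Matrix (Fin 2) (Fin 2) ℝ) : |A.det| ≤ opNorm A ^ 2 := by
  have h0 := sum_sq_apply_le_opNorm_sq A 0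
  have h1 := sum_sq_apply_le_opNorm_sq A 1
  simp only [Fin.sum_univ_two] at h0 h1
  refine abs_le_of_sq_le_sq ?_ (by positivity)
  -- Lagrange's identity: `det² = ‖col₀‖²‖col₁‖² - ⟪col₀, col₁⟫²`.
  calc A.det ^ 2 ≤ (A 0 0 ^ 2 + A 1 0 ^ 2) * (A 0 1 ^ 2 + A 1 1 ^ 2) := by
        rw [Matrix.det_fin_two]
        nlinarith [sq_nonneg (A 0 0 * A 0 1 + A 1 0 * A 1 1)]
    _ ≤ opNorm A ^ 2 * opNorm A ^ 2 := by gcongr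
    _ = (opNorm A ^ 2) ^ 2 := by ring

lemma wordProd_append {d m n : ℕ} (A : Fin 2 → Matrix (Fin d) (Fin d) ℝ)
    (v : Fin m → Fin 2) (w : Fin n → Fin 2) :
    wordProd A (Fin.append v w) = wordProd A v * wordProd A w := by
  simp [wordProd, List.ofFn_add, Fin.append_right]

lemma wordProd_const {d n : ℕ} (A : Fin 2 → Matrix (Fin d) (Fin d) ℝ) (i : Fin 2) :
    wordProd A (fun _ : Fin n => i) = A i ^ n := by
  rw [wordProd, List.ofFn_const, List.prod_replicate]

lemma det_wordProd {d n : ℕ} (A : Fin 2 → Matrix (Fin d) (Fin d) ℝ) (w : Fin n → Fin 2) :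
    (wordProd A w).det = ∏ j, (A (w j)).det := by
  rw [wordProd, ← Matrix.coe_detMonoidHom, map_list_prod, List.map_ofFn, List.prod_ofFn]
  rfl

lemma tendsto_add_mul_div_mul_add (a b c d : ℝ) (hc : c ≠ 0) :
    Tendsto (fun n : ℕ => (a + n * b) / (n * c + d)) atTop (𝓝 (b / c)) := by
  have h := ((tendsto_const_div_atTop_nhds_zero_nat a).add (tendsto_const_nhds (x := b))).div
    (tendsto_const_nhds.add (tendsto_const_div_atTop_nhds_zero_nat d)) (by simpa using hc)
  rw [zero_add, add_zero] at h
  refine h.congr' ?_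
  filter_upwards [eventually_ne_atTop 0] with n hn
  simp only [Pi.div_apply]
  field_simp

section minNormProd

variable (A : Fin 2 → Matrix (Fin 2) (Fin 2) ℝ)

lemma minNormProd_le {n : ℕ} (w : Fin n → Fin 2) : minNormProd A n ≤ opNorm (wordProd A w) :=
  ciInf_le ⟨0, by rintro _ ⟨v, rfl⟩; exact opNorm_nonneg _⟩ w

lemma minNormProd_add_add_le (l m n : ℕ) :
    minNormProd A (l + m + n) ≤ opNorm (A 0 ^ l * A 1 ^ m * A 0 ^ n) := by
  simpa only [wordProd_append, wordProd_const] using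
    minNormProd_le A (Fin.append (Fin.append (fun _ : Fin l => 0) fun _ : Fin m => 1)
      fun _ : Fin n => 0)

lemma minNormProd_add_le (m n : ℕ) :
    minNormProd A (m + n) ≤ minNormProd A m * minNormProd A n := by
  obtain ⟨v, hv⟩ := exists_eq_ciInf_of_finite (f := fun w : Fin m → Fin 2 => opNorm (wordProd A w))
  obtain ⟨w, hw⟩ := exists_eq_ciInf_of_finite (f := fun w : Fin n → Fin 2 => opNorm (wordProd A w))
  calc minNormProd A (m + n) ≤ opNorm (wordProd A (Fin.append v w)) := minNormProd_le A _
    _ ≤ opNorm (wordProd A v) * opNorm (wordProd A w) := by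
        rw [wordProd_append]; exact norm_mul_le (wordProd A v) (wordProd A w)
    _ = minNormProd A m * minNormProd A n := by rw [hv, hw]; rfl

lemma sqrt_min_abs_det_pow_le_minNormProd (n : ℕ) :
    √(min |(A 0).det| |(A 1).det|) ^ n ≤ minNormProd A n := by
  set c := min |(A 0).det| |(A 1).det|
  have hc0 : 0 ≤ c := le_min (abs_nonneg _) (abs_nonneg _)
  have hc : ∀ i, c ≤ |(A i).det| := by
    simp only [Fin.forall_fin_two]; exact ⟨min_le_left _ _, min_le_right _ _⟩
  refine le_ciInf fun w => ?_
  rw [← pow_le_pow_iff_left₀ (by positivity) (opNorm_nonneg _) two_ne_zero]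
  calc (√c ^ n) ^ 2 = ∏ _j : Fin n, c := by
        rw [← pow_mul, mul_comm, pow_mul, Real.sq_sqrt hc0, Finset.prod_const, Finset.card_fin]
    _ ≤ |(wordProd A w).det| := by
        rw [det_wordProd, Finset.abs_prod]
        exact Finset.prod_le_prod (fun _ _ => hc0) fun j _ => hc (w j)
    _ ≤ opNorm (wordProd A w) ^ 2 := abs_det_le_opNorm_sq _

variable {A}

lemma sqrt_min_abs_det_pos (hA : ∀ i, IsUnit (A i)) : 0 < √(min |(A 0).det| |(A 1).det|) := by
  have hdet : ∀ i, 0 < |(A i).det| := fun i =>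
    abs_pos.2 ((Matrix.isUnit_iff_isUnit_det _).1 (hA i)).ne_zero
  exact Real.sqrt_pos.2 (lt_min (hdet 0) (hdet 1))

lemma minNormProd_pos (hA : ∀ i, IsUnit (A i)) (n : ℕ) : 0 < minNormProd A n :=
  (pow_pos (sqrt_min_abs_det_pos hA) n).trans_le (sqrt_min_abs_det_pow_le_minNormProd A n)

lemma exists_lsr_eq_exp (hA : ∀ i, IsUnit (A i)) :
    ∃ L, lsr A = Real.exp L ∧ ∀ n ≠ 0, L ≤ Real.log (minNormProd A n) / n := by
  set u : ℕ → ℝ := fun n => Real.log (minNormProd A n)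
  have hpos := minNormProd_pos hA
  have hsub : Subadditive u := fun m n => by
    rw [← Real.log_mul (hpos m).ne' (hpos n).ne']
    exact Real.log_le_log (hpos _) (minNormProd_add_le A m n)
  have hbdd : BddBelow (Set.range fun n => u n / n) := by
    refine ⟨min 0 (Real.log √(min |(A 0).det| |(A 1).det|)), ?_⟩
    rintro _ ⟨n, rfl⟩
    rcases eq_or_ne n 0 with rfl | hn
    · simp
    · refine (min_le_right _ _).trans ((le_div_iff₀ (by positivity)).2 ?_)
      rw [mul_comm, ← Real.log_pow]
      exact Real.log_le_log (pow_pos (sqrt_min_abs_det_pos hA) n)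
        (sqrt_min_abs_det_pow_le_minNormProd A n)
  refine ⟨hsub.lim, Tendsto.limUnder_eq ?_, fun n hn => hsub.lim_le_div hbdd hn⟩
  refine ((Real.continuous_exp.tendsto _).comp (hsub.tendsto_lim hbdd)).congr fun n => ?_
  rw [Function.comp_apply, Real.rpow_def_of_pos (hpos n), mul_one_div]

lemma lsr_le_of_minNormProd_le (hA : ∀ i, IsUnit (A i)) {C r : ℝ} (hr : 0 < r) {p q : ℕ}
    (hp : p ≠ 0) (h : ∀ n, minNormProd A (p * n + q) ≤ C * r ^ n) :
    lsr A ≤ r ^ (1 / p : ℝ) := by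
  obtain ⟨L, hL, hLle⟩ := exists_lsr_eq_exp hA
  have hC : 0 < C := by simpa using (minNormProd_pos hA _).trans_le (h 0)
  have hbound : ∀ n : ℕ, n ≠ 0 → L ≤ (Real.log C + n * Real.log r) / (n * p + q) := fun n hn => by
    calc L ≤ Real.log (minNormProd A (p * n + q)) / ((p * n + q : ℕ) : ℝ) :=
          hLle _ (by have := Nat.mul_ne_zero hp hn; omega)
      _ ≤ Real.log (C * r ^ n) / ((p * n + q : ℕ) : ℝ) := by
          gcongr; exacts [minNormProd_pos hA _, h n]
      _ = _ := by
          rw [Real.log_mul hC.ne' (pow_ne_zero _ hr.ne'), Real.log_pow]; push_cast; ring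
  have hLr : L ≤ Real.log r / p :=
    ge_of_tendsto (tendsto_add_mul_div_mul_add _ _ _ _ (Nat.cast_ne_zero.2 hp))
      ((eventually_ne_atTop 0).mono hbound)
  rw [hL, Real.rpow_def_of_pos hr, mul_one_div]
  exact Real.exp_le_exp.2 hLr

end minNormProd

lemma rot_mul_rot (a b : ℝ) : rot a * rot b = rot (a + b) := by
  ext i j
  fin_cases i <;> fin_cases j <;>
    simp [rot, Matrix.mul_apply, Real.cos_add, Real.sin_add] <;> ring

lemma rot_zero : rot 0 = 1 := by
  ext i j; fin_cases i <;> fin_cases j <;> simp [rot]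

lemma rot_pow (θ : ℝ) (m : ℕ) : rot θ ^ m = rot (m * θ) := by
  induction m with
  | zero => simp [rot_zero]
  | succ m ih => rw [pow_succ, ih, rot_mul_rot]; push_cast; ring_nf

lemma smul_rot_pi_div_pow (c : ℝ) {k : ℕ} (hk : k ≠ 0) :
    (c • rot (Real.pi / (2 * k))) ^ k = c ^ k • rot (Real.pi / 2) := by
  rw [smul_pow, rot_pow]
  congr 2
  field_simp

lemma diagonal_mul_rot_pi_div_two_mul_diagonal (a b : ℝ) :
    Matrix.diagonal ![a, b] * rot (Real.pi / 2) * Matrix.diagonal ![a, b]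
      = (a * b) • rot (Real.pi / 2) := by
  ext i j
  fin_cases i <;> fin_cases j <;> simp [rot, Matrix.mul_apply, mul_comm]

lemma diagonal_pow_mul_rot_pi_div_two_mul_diagonal_pow (a b : ℝ) (n : ℕ) :
    Matrix.diagonal ![a, b] ^ n * rot (Real.pi / 2) * Matrix.diagonal ![a, b] ^ n
      = (a * b) ^ n • rot (Real.pi / 2) := by
  have hpow : ![a, b] ^ n = ![a ^ n, b ^ n] := by ext i; fin_cases i <;> rfl
  rw [Matrix.diagonal_pow, hpow, diagonal_mul_rot_pi_div_two_mul_diagonal, mul_pow]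

lemma det_rot (θ : ℝ) : (rot θ).det = 1 := by
  simp [rot, Matrix.det_fin_two_of, ← sq, Real.cos_sq_add_sin_sq]

theorem stmt14_general (lam del : ℝ) (hdel : 0 < del) (hdl : del < lam)
    (k : ℕ) (hk : 1 ≤ k) :
    (∀ n : ℕ, 1 ≤ n →
      (Matrix.diagonal ![lam, del]) ^ n * (lam • rot (Real.pi / (2 * k))) ^ k
          * (Matrix.diagonal ![lam, del]) ^ n
        = (lam ^ (n + k) * del ^ n) • rot (Real.pi / 2)) ∧
    lsr ![Matrix.diagonal ![lam, del], lam • rot (Real.pi / (2 * k))]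
      ≤ Real.sqrt (lam * del) := by
  have hlam : 0 < lam := hdel.trans hdl
  have hword : ∀ n : ℕ, (Matrix.diagonal ![lam, del]) ^ n * (lam • rot (Real.pi / (2 * k))) ^ k
      * (Matrix.diagonal ![lam, del]) ^ n = (lam ^ (n + k) * del ^ n) • rot (Real.pi / 2) := by
    intro n
    rw [smul_rot_pi_div_pow lam (by omega), Matrix.mul_smul, Matrix.smul_mul,
      diagonal_pow_mul_rot_pi_div_two_mul_diagonal_pow, smul_smul]
    congr 1
    ring
  refine ⟨fun n _ => hword n, ?_⟩
  set A := ![Matrix.diagonal ![lam, del], lam • rot (Real.pi / (2 * k))] with hA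
  have hunit : ∀ i, IsUnit (A i) := by
    simp only [Fin.forall_fin_two, Matrix.isUnit_iff_isUnit_det, isUnit_iff_ne_zero]
    simp [hA, det_rot, hlam.ne', hdel.ne']
  have hmin : ∀ n,
      minNormProd A (2 * n + k) ≤ lam ^ k * opNorm (rot (Real.pi / 2)) * (lam * del) ^ n :=
    fun n => calc
      minNormProd A (2 * n + k) = minNormProd A (n + k + n) := by congr 1; ring
      _ ≤ opNorm (A 0 ^ n * A 1 ^ k * A 0 ^ n) := minNormProd_add_add_le A n k n
      _ = _ := by
        simp only [hA, Matrix.cons_val_zero, Matrix.cons_val_one, hword, opNorm_eq_norm,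
          norm_smul, Real.norm_of_nonneg (by positivity : 0 ≤ lam ^ (n + k) * del ^ n)]
        ring
  refine (lsr_le_of_minNormProd_le hunit (mul_pos hlam hdel) two_ne_zero hmin).trans_eq ?_
  rw [Real.sqrt_eq_rpow]
  norm_num

/-- For `B₁ = diag(λ,δ)` and `B₂ = λ·R_{π/(2k)}`:
`B₁ⁿB₂ᵏB₁ⁿ = λ^{n+k}δⁿ·R_{π/2}` for all `n ≥ 1`, and consequently `ϱ̲(B₁,B₂) ≤ √(λδ)`. -/
theorem stmt14 (lam del : ℝ) (hdel : 0 < del) (hdl : del < lam) (hlam : lam < 1)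
    (k : ℕ) (hk : 1 ≤ k) :
    (∀ n : ℕ, 1 ≤ n →
      (Matrix.diagonal ![lam, del]) ^ n * (lam • rot (Real.pi / (2 * k))) ^ k
          * (Matrix.diagonal ![lam, del]) ^ n
        = (lam ^ (n + k) * del ^ n) • rot (Real.pi / 2)) ∧
    lsr ![Matrix.diagonal ![lam, del], lam • rot (Real.pi / (2 * k))]
      ≤ Real.sqrt (lam * del) :=
  stmt14_general lam del hdel hdl k hk
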